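/- arXiv:1601.03329 — 4 statements merged into one kernel-verified Lean document; each statement's English description precedes it below -/
import Mathlib

section
/- Let n, m be positive integers, A, Q ∈ ℝ^{n×n}, B ∈ ℝ^{n×m}, N₁, …, N_n ∈ ℝ^{n×m}, and R ∈ ℝ^{m×m} invertible. Fix x, λ ∈ ℝ^n and write N(x) = Σ_{j=1}^n x_j N_j. Define Ã ∈ ℝ^{n×n} entrywise by Ã_{ij} = A_{ij} − [(N_j R⁻¹ (B + N(x))ᵀ + (B + N(x)) R⁻¹ N_jᵀ) λ]_i, and define G = B R⁻¹ Bᵀ − N(x) R⁻¹ N(x)ᵀ. Then: (i) Ã x − G λ = A x − (B + N(x)) R⁻¹ (B + N(x))ᵀ λ, and (ii) for every index i, [−Qx − Ãᵀλ]_i = −[Qx]_i − [Aᵀλ]_i + λᵀ (N_i R⁻¹ (B + N(x))ᵀ + (B + N(x)) R⁻¹ N_iᵀ) λ. -/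
/-!
Both identities are pure matrix algebra. The correction subtracted from column `j` of `A` is
linear in `N j`, so `Ã x` differs from `A x` by the same correction with `N j` replaced by
`N(x) = ∑ x_j N_j`; this correction plus `G` expands to `(B + N(x)) R⁻¹ (B + N(x))ᵀ`.
For `Ãᵀ λ` the correction in row `i` is the quadratic form `λᵀ (…) λ` of the `i`-th term.
-/

open Matrix

section

variable {ι τ κ α : Type*}

theorem mulVec_sub_transpose_of [Fintype ι] [CommRing α] (A : Matrix ι ι α) (v : ι → ι → α)
    (x : ι → α) :
    (A - (of v)ᵀ) *ᵥ x = A *ᵥ x - ∑ j, x j • v j := by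
  rw [sub_mulVec, mulVec_transpose, vecMul_eq_sum]
  rfl

theorem transpose_sub_transpose_of_mulVec_apply [Fintype ι] [CommRing α] (A : Matrix ι ι α)
    (v : ι → ι → α) (y : ι → α) (i : ι) :
    ((A - (of v)ᵀ)ᵀ *ᵥ y) i = (Aᵀ *ᵥ y) i - y ⬝ᵥ v i := by
  rw [transpose_sub, transpose_transpose, sub_mulVec, Pi.sub_apply, dotProduct_comm]
  rfl

theorem sum_smul_mul_transpose_add_mul_transpose [Fintype τ] [Fintype κ] [CommRing α]
    (N : τ → Matrix ι κ α) (x : τ → α) (S : Matrix κ κ α) (C : Matrix ι κ α) :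
    ∑ j, x j • (N j * S * Cᵀ + C * S * (N j)ᵀ) =
      (∑ j, x j • N j) * S * Cᵀ + C * S * (∑ j, x j • N j)ᵀ := by
  simp only [smul_add, Finset.sum_add_distrib, Matrix.sum_mul, Matrix.mul_sum, transpose_sum,
    transpose_smul, Matrix.smul_mul, Matrix.mul_smul]

theorem mul_transpose_add_add_sub [Fintype κ] [Ring α] (B K : Matrix ι κ α) (S : Matrix κ κ α) :
    K * S * (B + K)ᵀ + (B + K) * S * Kᵀ + (B * S * Bᵀ - K * S * Kᵀ) =
      (B + K) * S * (B + K)ᵀ := by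
  simp only [transpose_add, Matrix.add_mul, Matrix.mul_add]
  abel

end

theorem stmt_2_general {n m : ℕ}
    (A Q : Matrix (Fin n) (Fin n) ℝ) (B : Matrix (Fin n) (Fin m) ℝ)
    (N : Fin n → Matrix (Fin n) (Fin m) ℝ)
    (R : Matrix (Fin m) (Fin m) ℝ)
    (x lam : Fin n → ℝ)
    (Nx : Matrix (Fin n) (Fin m) ℝ) (hNx : Nx = ∑ j, x j • N j)
    (Atil : Matrix (Fin n) (Fin n) ℝ)
    (hA : ∀ i j, Atil i j =
      A i j - ((N j * R⁻¹ * (B + Nx)ᵀ + (B + Nx) * R⁻¹ * (N j)ᵀ) *ᵥ lam) i)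
    (G : Matrix (Fin n) (Fin n) ℝ)
    (hG : G = B * R⁻¹ * Bᵀ - Nx * R⁻¹ * Nxᵀ) :
    Atil *ᵥ x - G *ᵥ lam = A *ᵥ x - ((B + Nx) * R⁻¹ * (B + Nx)ᵀ) *ᵥ lam ∧
    ∀ i, (-(Q *ᵥ x) - Atilᵀ *ᵥ lam) i =
      -((Q *ᵥ x) i) - (Aᵀ *ᵥ lam) i +
        lam ⬝ᵥ ((N i * R⁻¹ * (B + Nx)ᵀ + (B + Nx) * R⁻¹ * (N i)ᵀ) *ᵥ lam) := by
  set M := fun j => N j * R⁻¹ * (B + Nx)ᵀ + (B + Nx) * R⁻¹ * (N j)ᵀ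
  have hAtil : Atil = A - (of fun j => M j *ᵥ lam)ᵀ := by
    ext i j
    simp [hA, M]
  have hcorrection : ∑ j, x j • (M j *ᵥ lam) =
      (Nx * R⁻¹ * (B + Nx)ᵀ + (B + Nx) * R⁻¹ * Nxᵀ) *ᵥ lam := by
    simp only [hNx, ← sum_smul_mul_transpose_add_mul_transpose, sum_mulVec, smul_mulVec, M]
  constructor
  · rw [hAtil, mulVec_sub_transpose_of, hcorrection, hG, sub_sub, ← add_mulVec,
      mul_transpose_add_add_sub]
  · intro i
    rw [Pi.sub_apply, Pi.neg_apply, hAtil, transpose_sub_transpose_of_mulVec_apply,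
      dotProduct_comm]
    ring

/-- The change of variables `Ã`, `G = B̃R⁻¹B̃ᵀ` rewrites the Pontryagin
state and co-state equations of the bilinear problem into canonical LQ form. -/
theorem stmt_2 {n m : ℕ}
    (A Q : Matrix (Fin n) (Fin n) ℝ) (B : Matrix (Fin n) (Fin m) ℝ)
    (N : Fin n → Matrix (Fin n) (Fin m) ℝ)
    (R : Matrix (Fin m) (Fin m) ℝ) (hR : IsUnit R)
    (x lam : Fin n → ℝ)
    (Nx : Matrix (Fin n) (Fin m) ℝ) (hNx : Nx = ∑ j, x j • N j)
    (Atil : Matrix (Fin n) (Fin n) ℝ)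
    (hA : ∀ i j, Atil i j =
      A i j - ((N j * R⁻¹ * (B + Nx)ᵀ + (B + Nx) * R⁻¹ * (N j)ᵀ) *ᵥ lam) i)
    (G : Matrix (Fin n) (Fin n) ℝ)
    (hG : G = B * R⁻¹ * Bᵀ - Nx * R⁻¹ * Nxᵀ) :
    Atil *ᵥ x - G *ᵥ lam = A *ᵥ x - ((B + Nx) * R⁻¹ * (B + Nx)ᵀ) *ᵥ lam ∧
    ∀ i, (-(Q *ᵥ x) - Atilᵀ *ᵥ lam) i =
      -((Q *ᵥ x) i) - (Aᵀ *ᵥ lam) i +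
        lam ⬝ᵥ ((N i * R⁻¹ * (B + Nx)ᵀ + (B + Nx) * R⁻¹ * (N i)ᵀ) *ᵥ lam) :=
  stmt_2_general A Q B N R x lam Nx hNx Atil hA G hG
end

section
/- Let t_f > 0, and let Ã, G, Q : [0, t_f] → ℝ^{n×n} be continuous. Suppose x, λ : [0, t_f] → ℝ^n are differentiable with ẋ(t) = Ã(t)x(t) − G(t)λ(t) and λ̇(t) = −Q(t)x(t) − Ã(t)ᵀλ(t) for all t ∈ [0, t_f]; suppose K : [0, t_f] → ℝ^{n×n} is differentiable and satisfies the Riccati equation K̇(t) = −Q(t) − Ã(t)ᵀK(t) − K(t)Ã(t) + K(t)G(t)K(t) with K(t_f) = 0; and suppose S : [0, t_f] → ℝ^{n×n} is differentiable with Ṡ(t) = −(Ã(t)ᵀ − K(t)G(t))S(t) and S(t_f) = I. Set ν = λ(t_f). Then λ(t) = K(t)x(t) + S(t)ν for all t ∈ [0, t_f]. -/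
/-!
The sweep error `e = λ - K x - S ν` satisfies the homogeneous linear equation
`ė = -(Ãᵀ - K G) e`: the Riccati equation for `K` is exactly what cancels the `x`-terms, and
the equation for `S` absorbs the remaining term. Since `ν = λ(t_f)`, `K(t_f) = 0` and
`S(t_f) = I`, the error vanishes at `t_f`, and a linear equation with continuous coefficients
has only the zero solution with zero terminal value (Grönwall).
-/

open Matrix Set

section

variable {m n : Type*} {s : Set ℝ}

theorem ContinuousOn.matrix_of_hasDerivWithinAt {A A' : ℝ → Matrix m n ℝ}
    (hA : ∀ t ∈ s, ∀ i j, HasDerivWithinAt (fun r => A r i j) (A' t i j) s t) :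
    ContinuousOn A s :=
  continuousOn_pi.2 fun i => continuousOn_pi.2 fun j => fun t ht =>
    (hA t ht i j).continuousWithinAt

variable [Fintype n] {t : ℝ}

theorem HasDerivWithinAt.matrix_mulVec {A : ℝ → Matrix m n ℝ} {A' : Matrix m n ℝ}
    {x : ℝ → n → ℝ} {x' : n → ℝ} (hA : ∀ i j, HasDerivWithinAt (fun r => A r i j) (A' i j) s t)
    (hx : HasDerivWithinAt x x' s t) :
    HasDerivWithinAt (fun r => A r *ᵥ x r) (A' *ᵥ x t + A t *ᵥ x') s t := by
  refine hasDerivWithinAt_pi.2 fun i => ?_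
  have hsum := HasDerivWithinAt.fun_sum (u := Finset.univ) fun j _ =>
    (hA i j).mul (hasDerivWithinAt_pi.1 hx j)
  refine hsum.congr_deriv ?_
  simp only [Pi.add_apply, mulVec, dotProduct, Finset.sum_add_distrib]

theorem HasDerivWithinAt.matrix_mulVec_const {A : ℝ → Matrix m n ℝ} {A' : Matrix m n ℝ}
    (hA : ∀ i j, HasDerivWithinAt (fun r => A r i j) (A' i j) s t) (v : n → ℝ) :
    HasDerivWithinAt (fun r => A r *ᵥ v) (A' *ᵥ v) s t := by
  simpa using HasDerivWithinAt.matrix_mulVec hA (hasDerivWithinAt_const t s v)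

end

section

attribute [local instance] Matrix.linftyOpNormedAddCommGroup

variable {n : Type*} [Fintype n]

theorem lipschitzWith_mulVec_of_norm_le {M : Matrix n n ℝ} {C : ℝ} (hM : ‖M‖ ≤ C) :
    LipschitzWith C.toNNReal (M *ᵥ ·) :=
  LipschitzWith.of_dist_le' fun v w => by
    rw [dist_eq_norm, dist_eq_norm, ← mulVec_sub]
    exact (linfty_opNorm_mulVec M (v - w)).trans
      (mul_le_mul_of_nonneg_right hM (norm_nonneg _))

theorem eqOn_zero_of_hasDerivWithinAt_mulVec {M : ℝ → Matrix n n ℝ} {e : ℝ → n → ℝ} {a b : ℝ}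
    (hM : ContinuousOn M (Icc a b))
    (he : ∀ t ∈ Icc a b, HasDerivWithinAt e (M t *ᵥ e t) (Icc a b) t) (hb : e b = 0) :
    EqOn e 0 (Icc a b) := by
  obtain ⟨C, hC⟩ := isCompact_Icc.exists_bound_of_continuousOn hM
  refine ODE_solution_unique_of_mem_Icc_left (v := fun t => (M t *ᵥ ·)) (s := fun _ => univ)
    (fun t ht => (lipschitzWith_mulVec_of_norm_le (hC t (Ioc_subset_Icc_self ht))).lipschitzOnWith)
    (fun t ht => (he t ht).continuousWithinAt)
    (fun t ht => (he t (Ioc_subset_Icc_self ht)).mono_of_mem_nhdsWithin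
      (Icc_mem_nhdsLE_of_mem ht))
    (fun _ _ => trivial) continuousOn_const
    (fun t _ => (hasDerivWithinAt_const t (Iic t) 0).congr_deriv (mulVec_zero _).symm)
    (fun _ _ => trivial) hb

end

section

variable {n : Type*} [Fintype n] {s : Set ℝ} {t : ℝ}

theorem hasDerivWithinAt_sweepError (A G Q : Matrix n n ℝ) {x lam : ℝ → n → ℝ}
    {K S : ℝ → Matrix n n ℝ} (ν : n → ℝ)
    (hx : HasDerivWithinAt x (A *ᵥ x t - G *ᵥ lam t) s t)
    (hlam : HasDerivWithinAt lam (-(Q *ᵥ x t) - Aᵀ *ᵥ lam t) s t)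
    (hK : ∀ i j, HasDerivWithinAt (fun r => K r i j)
      ((-Q - Aᵀ * K t - K t * A + K t * G * K t) i j) s t)
    (hS : ∀ i j, HasDerivWithinAt (fun r => S r i j) ((-((Aᵀ - K t * G) * S t)) i j) s t) :
    HasDerivWithinAt (fun r => lam r - K r *ᵥ x r - S r *ᵥ ν)
      (-(Aᵀ - K t * G) *ᵥ (lam t - K t *ᵥ x t - S t *ᵥ ν)) s t := by
  refine ((hlam.sub (HasDerivWithinAt.matrix_mulVec hK hx)).sub
    (HasDerivWithinAt.matrix_mulVec_const hS ν)).congr_deriv ?_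
  simp only [neg_mulVec, mulVec_sub, sub_mulVec, add_mulVec, sub_mul, ← mulVec_mulVec]
  abel

end

theorem stmt_3_general {n : ℕ} (t_f : ℝ)
    (Atil G Q : ℝ → Matrix (Fin n) (Fin n) ℝ)
    (hAc : ContinuousOn Atil (Icc 0 t_f))
    (hGc : ContinuousOn G (Icc 0 t_f))
    (x lam : ℝ → (Fin n → ℝ))
    (hx : ∀ t ∈ Icc 0 t_f,
      HasDerivWithinAt x (Atil t *ᵥ x t - G t *ᵥ lam t) (Icc 0 t_f) t)
    (hlam : ∀ t ∈ Icc 0 t_f,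
      HasDerivWithinAt lam (-(Q t *ᵥ x t) - (Atil t)ᵀ *ᵥ lam t) (Icc 0 t_f) t)
    (K : ℝ → Matrix (Fin n) (Fin n) ℝ)
    (hK : ∀ t ∈ Icc 0 t_f, ∀ i j,
      HasDerivWithinAt (fun s => K s i j)
        ((-Q t - (Atil t)ᵀ * K t - K t * Atil t + K t * G t * K t) i j)
        (Icc 0 t_f) t)
    (hKf : K t_f = 0)
    (S : ℝ → Matrix (Fin n) (Fin n) ℝ)
    (hS : ∀ t ∈ Icc 0 t_f, ∀ i j,
      HasDerivWithinAt (fun s => S s i j)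
        ((-(((Atil t)ᵀ - K t * G t) * S t)) i j) (Icc 0 t_f) t)
    (hSf : S t_f = 1) :
    ∀ t ∈ Icc 0 t_f, lam t = K t *ᵥ x t + S t *ᵥ lam t_f := by
  intro t ht
  have hKc : ContinuousOn K (Icc 0 t_f) := ContinuousOn.matrix_of_hasDerivWithinAt hK
  have hMc : ContinuousOn (fun u => -((Atil u)ᵀ - K u * G u)) (Icc 0 t_f) :=
    ((continuous_id.matrix_transpose.comp_continuousOn hAc).sub (hKc.mul hGc)).neg
  have h_error := eqOn_zero_of_hasDerivWithinAt_mulVec hMc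
    (fun u hu => hasDerivWithinAt_sweepError (Atil u) (G u) (Q u) (lam t_f)
      (hx u hu) (hlam u hu) (hK u hu) (hS u hu))
    (by simp [hKf, hSf]) ht
  rw [← sub_eq_zero, ← sub_sub]
  exact h_error

/-- The sweep representation of the co-state: if `(x, λ)` solve the
canonical state/co-state equations, `K` solves the Riccati equation with
`K(t_f) = 0`, and `S` solves `Ṡ = −(Ãᵀ − KG)S` with `S(t_f) = I`, then with
`ν = λ(t_f)` one has `λ(t) = K(t)x(t) + S(t)ν` on `[0, t_f]`. -/
theorem stmt_3 {n : ℕ} (t_f : ℝ) (ht : 0 < t_f)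
    (Atil G Q : ℝ → Matrix (Fin n) (Fin n) ℝ)
    (hAc : ContinuousOn Atil (Icc 0 t_f))
    (hGc : ContinuousOn G (Icc 0 t_f))
    (hQc : ContinuousOn Q (Icc 0 t_f))
    (x lam : ℝ → (Fin n → ℝ))
    (hx : ∀ t ∈ Icc 0 t_f,
      HasDerivWithinAt x (Atil t *ᵥ x t - G t *ᵥ lam t) (Icc 0 t_f) t)
    (hlam : ∀ t ∈ Icc 0 t_f,
      HasDerivWithinAt lam (-(Q t *ᵥ x t) - (Atil t)ᵀ *ᵥ lam t) (Icc 0 t_f) t)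
    (K : ℝ → Matrix (Fin n) (Fin n) ℝ)
    (hK : ∀ t ∈ Icc 0 t_f, ∀ i j,
      HasDerivWithinAt (fun s => K s i j)
        ((-Q t - (Atil t)ᵀ * K t - K t * Atil t + K t * G t * K t) i j)
        (Icc 0 t_f) t)
    (hKf : K t_f = 0)
    (S : ℝ → Matrix (Fin n) (Fin n) ℝ)
    (hS : ∀ t ∈ Icc 0 t_f, ∀ i j,
      HasDerivWithinAt (fun s => S s i j)
        ((-(((Atil t)ᵀ - K t * G t) * S t)) i j) (Icc 0 t_f) t)
    (hSf : S t_f = 1) :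
    ∀ t ∈ Icc 0 t_f, lam t = K t *ᵥ x t + S t *ᵥ lam t_f :=
  stmt_3_general t_f Atil G Q hAc hGc x lam hx hlam K hK hKf S hS hSf
end

section
/- Let t_f > 0, ν ∈ ℝ^n, and let Ã, G, Q : [0, t_f] → ℝ^{n×n} be continuous with Q(t) and G(t) symmetric. Suppose K, S, P : [0, t_f] → ℝ^{n×n} are differentiable with K(t) symmetric for all t, K̇(t) = −Q(t) − Ã(t)ᵀK(t) − K(t)Ã(t) + K(t)G(t)K(t), Ṡ(t) = −(Ã(t)ᵀ − K(t)G(t))S(t), and Ṗ(t) = S(t)ᵀG(t)S(t). Define V : [0, t_f] × ℝ^n → ℝ by V(t, x) = (1/2)xᵀK(t)x + xᵀS(t)ν + (1/2)νᵀP(t)ν. Then for every t ∈ [0, t_f] and every x ∈ ℝ^n: ∂V/∂t(t,x) + (K(t)x + S(t)ν)ᵀ Ã(t) x + (1/2) xᵀQ(t)x − (1/2)(K(t)x + S(t)ν)ᵀ G(t) (K(t)x + S(t)ν) = 0, and moreover the gradient of V(t, ·) at x equals K(t)x + S(t)ν. -/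
/-!
Since `V(t, x)` is a sum of bilinear expressions in the entries of `K, S, P`, its time
derivative is obtained by replacing `K, S, P` with `K̇, Ṡ, Ṗ`. Substituting the Riccati
equations and using the symmetry of `K` and `G` collapses this to the Hamiltonian at the
costate `K x + S ν`. Along a line `x + s h`, `V(t, ·)` is a quadratic polynomial in `s`, whose
linear coefficient is `(K x + S ν) ⬝ h`.
-/

open Matrix Set

theorem hasDerivWithinAt_dotProduct_mulVec {𝕜 m n : Type*} [NontriviallyNormedField 𝕜]
    [Fintype m] [Fintype n] {M : 𝕜 → Matrix m n 𝕜} {M' : Matrix m n 𝕜}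
    {s : Set 𝕜} {t : 𝕜} (hM : ∀ i j, HasDerivWithinAt (fun τ => M τ i j) (M' i j) s t)
    (u : m → 𝕜) (v : n → 𝕜) :
    HasDerivWithinAt (fun τ => u ⬝ᵥ (M τ *ᵥ v)) (u ⬝ᵥ (M' *ᵥ v)) s t := by
  have hsum : ∀ N : Matrix m n 𝕜, u ⬝ᵥ (N *ᵥ v) = ∑ i, ∑ j, u i * (N i j * v j) := fun N => by
    simp only [dotProduct, mulVec, Finset.mul_sum]
  simp only [hsum]
  exact HasDerivWithinAt.fun_sum fun i _ =>
    HasDerivWithinAt.fun_sum fun j _ => ((hM i j).mul_const (v j)).const_mul (u i)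

theorem Matrix.IsSymm.dotProduct_mulVec_comm {R n : Type*} [CommSemiring R] [Fintype n]
    {M : Matrix n n R} (hM : M.IsSymm) (u v : n → R) :
    u ⬝ᵥ (M *ᵥ v) = v ⬝ᵥ (M *ᵥ u) := by
  simpa only [hM.eq] using dotProduct_transpose_mulVec M u v

theorem riccati_quadratic_form_eq_hamiltonian {𝕜 n : Type*} [Field 𝕜] [CharZero 𝕜] [Fintype n]
    {A G Q K S : Matrix n n 𝕜} (hK : K.IsSymm) (hG : G.IsSymm) (x ν : n → 𝕜) :
    (1/2) * (x ⬝ᵥ ((-Q - Aᵀ * K - K * A + K * G * K) *ᵥ x))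
        + x ⬝ᵥ (-((Aᵀ - K * G) * S) *ᵥ ν) + (1/2) * (ν ⬝ᵥ ((Sᵀ * G * S) *ᵥ ν))
      = -((K *ᵥ x + S *ᵥ ν) ⬝ᵥ (A *ᵥ x)) - (1/2) * (x ⬝ᵥ (Q *ᵥ x))
        + (1/2) * ((K *ᵥ x + S *ᵥ ν) ⬝ᵥ (G *ᵥ (K *ᵥ x + S *ᵥ ν))) := by
  simp only [← mulVec_mulVec, sub_mulVec, add_mulVec, neg_mulVec, mulVec_add,
    dotProduct_add, dotProduct_sub, dotProduct_neg, dotProduct_transpose_mulVec,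
    hK.dotProduct_mulVec_comm, hG.dotProduct_mulVec_comm, dotProduct_comm]
  ring

theorem hasDerivAt_quadratic_form_along_line {𝕜 n : Type*} [NontriviallyNormedField 𝕜]
    [CharZero 𝕜] [Fintype n] {K : Matrix n n 𝕜} (hK : K.IsSymm) (b : n → 𝕜) (c : 𝕜)
    (x h : n → 𝕜) :
    HasDerivAt (fun s : 𝕜 => (1/2) * ((x + s • h) ⬝ᵥ (K *ᵥ (x + s • h))) + (x + s • h) ⬝ᵥ b + c)
      ((K *ᵥ x + b) ⬝ᵥ h) 0 := by
  have hpoly : (fun s : 𝕜 => (1/2) * ((x + s • h) ⬝ᵥ (K *ᵥ (x + s • h))) + (x + s • h) ⬝ᵥ b + c)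
      = fun s => (1/2) * (h ⬝ᵥ (K *ᵥ h)) * s ^ 2 + ((K *ᵥ x + b) ⬝ᵥ h) * s
          + ((1/2) * (x ⬝ᵥ (K *ᵥ x)) + x ⬝ᵥ b + c) := by
    funext s
    simp only [mulVec_add, mulVec_smul, dotProduct_add, add_dotProduct, dotProduct_smul,
      smul_dotProduct, smul_eq_mul, hK.dotProduct_mulVec_comm x h, dotProduct_comm b,
      dotProduct_comm (K *ᵥ x) h]
    ring
  rw [hpoly]
  simpa using (((hasDerivAt_pow 2 (0 : 𝕜)).const_mul ((1/2) * (h ⬝ᵥ (K *ᵥ h)))).add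
    ((hasDerivAt_id (0 : 𝕜)).const_mul ((K *ᵥ x + b) ⬝ᵥ h))).add_const
    ((1/2) * (x ⬝ᵥ (K *ᵥ x)) + x ⬝ᵥ b + c)

theorem stmt_9_general {n : ℕ} (t_f : ℝ) (ν : Fin n → ℝ)
    (Atil G Q : ℝ → Matrix (Fin n) (Fin n) ℝ)
    (hGsym : ∀ t ∈ Icc 0 t_f, (G t).IsSymm)
    (K S P : ℝ → Matrix (Fin n) (Fin n) ℝ)
    (hKsym : ∀ t ∈ Icc 0 t_f, (K t).IsSymm)
    (hK : ∀ t ∈ Icc 0 t_f, ∀ i j,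
      HasDerivWithinAt (fun s => K s i j)
        ((-Q t - (Atil t)ᵀ * K t - K t * Atil t + K t * G t * K t) i j)
        (Icc 0 t_f) t)
    (hS : ∀ t ∈ Icc 0 t_f, ∀ i j,
      HasDerivWithinAt (fun s => S s i j)
        ((-(((Atil t)ᵀ - K t * G t) * S t)) i j) (Icc 0 t_f) t)
    (hP : ∀ t ∈ Icc 0 t_f, ∀ i j,
      HasDerivWithinAt (fun s => P s i j)
        (((S t)ᵀ * G t * S t) i j) (Icc 0 t_f) t)
    (V : ℝ → (Fin n → ℝ) → ℝ)
    (hV : ∀ t x, V t x =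
      (1/2) * (x ⬝ᵥ (K t *ᵥ x)) + x ⬝ᵥ (S t *ᵥ ν) + (1/2) * (ν ⬝ᵥ (P t *ᵥ ν))) :
    ∀ t ∈ Icc 0 t_f, ∀ x : Fin n → ℝ,
      HasDerivWithinAt (fun s => V s x)
        (-((K t *ᵥ x + S t *ᵥ ν) ⬝ᵥ (Atil t *ᵥ x))
          - (1/2) * (x ⬝ᵥ (Q t *ᵥ x))
          + (1/2) * ((K t *ᵥ x + S t *ᵥ ν) ⬝ᵥ (G t *ᵥ (K t *ᵥ x + S t *ᵥ ν))))
        (Icc 0 t_f) t ∧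
      ∀ h : Fin n → ℝ,
        HasDerivAt (fun s : ℝ => V t (x + s • h))
          ((K t *ᵥ x + S t *ᵥ ν) ⬝ᵥ h) 0 := by
  intro t ht x
  refine ⟨?_, fun h => ?_⟩
  · rw [← riccati_quadratic_form_eq_hamiltonian (hKsym t ht) (hGsym t ht)]
    simp only [hV]
    exact (((hasDerivWithinAt_dotProduct_mulVec (hK t ht) x x).const_mul (1/2)).add
      (hasDerivWithinAt_dotProduct_mulVec (hS t ht) x ν)).add
      ((hasDerivWithinAt_dotProduct_mulVec (hP t ht) ν ν).const_mul (1/2))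
  · simp only [hV]
    exact hasDerivAt_quadratic_form_along_line (hKsym t ht) _ _ x h

/-- The quadratic value function
`V(t,x) = (1/2)xᵀK(t)x + xᵀS(t)ν + (1/2)νᵀP(t)ν` solves the HJB identity
`∂V/∂t + (Kx + Sν)ᵀÃx + (1/2)xᵀQx − (1/2)(Kx + Sν)ᵀG(Kx + Sν) = 0`, and its
spatial gradient (directional derivative in every direction `h`) is
`(K(t)x + S(t)ν) ⬝ᵥ h`. -/
theorem stmt_9 {n : ℕ} (t_f : ℝ) (ht : 0 < t_f) (ν : Fin n → ℝ)
    (Atil G Q : ℝ → Matrix (Fin n) (Fin n) ℝ)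
    (hAc : ContinuousOn Atil (Icc 0 t_f))
    (hGc : ContinuousOn G (Icc 0 t_f))
    (hQc : ContinuousOn Q (Icc 0 t_f))
    (hGsym : ∀ t ∈ Icc 0 t_f, (G t).IsSymm)
    (hQsym : ∀ t ∈ Icc 0 t_f, (Q t).IsSymm)
    (K S P : ℝ → Matrix (Fin n) (Fin n) ℝ)
    (hKsym : ∀ t ∈ Icc 0 t_f, (K t).IsSymm)
    (hK : ∀ t ∈ Icc 0 t_f, ∀ i j,
      HasDerivWithinAt (fun s => K s i j)
        ((-Q t - (Atil t)ᵀ * K t - K t * Atil t + K t * G t * K t) i j)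
        (Icc 0 t_f) t)
    (hS : ∀ t ∈ Icc 0 t_f, ∀ i j,
      HasDerivWithinAt (fun s => S s i j)
        ((-(((Atil t)ᵀ - K t * G t) * S t)) i j) (Icc 0 t_f) t)
    (hP : ∀ t ∈ Icc 0 t_f, ∀ i j,
      HasDerivWithinAt (fun s => P s i j)
        (((S t)ᵀ * G t * S t) i j) (Icc 0 t_f) t)
    (V : ℝ → (Fin n → ℝ) → ℝ)
    (hV : ∀ t x, V t x =
      (1/2) * (x ⬝ᵥ (K t *ᵥ x)) + x ⬝ᵥ (S t *ᵥ ν) + (1/2) * (ν ⬝ᵥ (P t *ᵥ ν))) :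
    ∀ t ∈ Icc 0 t_f, ∀ x : Fin n → ℝ,
      HasDerivWithinAt (fun s => V s x)
        (-((K t *ᵥ x + S t *ᵥ ν) ⬝ᵥ (Atil t *ᵥ x))
          - (1/2) * (x ⬝ᵥ (Q t *ᵥ x))
          + (1/2) * ((K t *ᵥ x + S t *ᵥ ν) ⬝ᵥ (G t *ᵥ (K t *ᵥ x + S t *ᵥ ν))))
        (Icc 0 t_f) t ∧
      ∀ h : Fin n → ℝ,
        HasDerivAt (fun s : ℝ => V t (x + s • h))
          ((K t *ᵥ x + S t *ᵥ ν) ⬝ᵥ h) 0 :=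
  stmt_9_general t_f ν Atil G Q hGsym K S P hKsym hK hS hP V hV
end

section
/- Let t_f > 0, let Ã : [0, t_f] → ℝ^{n×n} and B : [0, t_f] → ℝ^{n×m} be continuous, and R ∈ ℝ^{m×m} symmetric positive definite; set G(t) = B(t)R⁻¹B(t)ᵀ. Let Ψ : [0, t_f] → ℝ^{n×n} be differentiable with Ψ̇(t) = −Ψ(t)Ã(t), Ψ(0) = I, and Ψ(t) invertible for all t. Define S(t) = (Ψ(t_f)⁻¹Ψ(t))ᵀ, let P : [0, t_f] → ℝ^{n×n} be differentiable with Ṗ(t) = S(t)ᵀG(t)S(t) and P(t_f) = 0, and set W = ∫_0^{t_f} Ψ(σ)G(σ)Ψ(σ)ᵀ dσ. Then: (i) P(0) = −Ψ(t_f)⁻¹ W (Ψ(t_f)⁻¹)ᵀ, so P(0) is invertible whenever W is; and (ii) if W is invertible, then with ν = P(0)⁻¹(x_f − S(0)ᵀx_0) and ξ = Ψ(t_f)x_f − x_0, one has −R⁻¹B(t)ᵀS(t)ν = R⁻¹B(t)ᵀΨ(t)ᵀW⁻¹ξ for every t ∈ [0, t_f]. -/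
/-!
Since `S = (Ψ(t_f)⁻¹ Ψ)ᵀ`, the integrand `SᵀGS` of `P` is the Gramian integrand `ΨGΨᵀ`
conjugated by the constant matrix `Ψ(t_f)⁻¹`; integrating `Ṗ` over `[0, t_f]` against
`P(t_f) = 0` gives `P(0) = −Ψ(t_f)⁻¹ W Ψ(t_f)⁻ᵀ`. Inverting, `P(0)⁻¹ = −Ψ(t_f)ᵀ W⁻¹ Ψ(t_f)`,
and `Ψ(0) = I` gives `S(0)ᵀ = Ψ(t_f)⁻¹`, so the feedback gain collapses to the Gramian one and
`Ψ(t_f)(x_f − Ψ(t_f)⁻¹x₀) = ξ`.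
-/

open Matrix Set

open MeasureTheory

namespace Matrix

variable {ι κ ν μ : Type*}

theorem continuousOn_of_hasDerivWithinAt_apply {M M' : ℝ → Matrix ι κ ℝ} {s : Set ℝ}
    (h : ∀ t ∈ s, ∀ i j, HasDerivWithinAt (fun u => M u i j) (M' t i j) s t) :
    ContinuousOn M s :=
  continuousOn_pi.2 fun i => continuousOn_pi.2 fun j t ht => (h t ht i j).continuousWithinAt

theorem intervalIntegrable_apply_of_continuousOn {M : ℝ → Matrix ι κ ℝ} {a b : ℝ}
    (hM : ContinuousOn M (uIcc a b)) (i : ι) (j : κ) :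
    IntervalIntegrable (fun t => M t i j) volume a b :=
  (((continuous_apply j).comp (continuous_apply i)).comp_continuousOn hM).intervalIntegrable

theorem sub_eq_integral_of_hasDerivWithinAt_apply {M M' : ℝ → Matrix ι κ ℝ} {a b : ℝ}
    (hab : a ≤ b)
    (hM : ∀ t ∈ Icc a b, ∀ i j, HasDerivWithinAt (fun u => M u i j) (M' t i j) (Icc a b) t)
    (hM' : ∀ i j, IntervalIntegrable (fun t => M' t i j) volume a b) :
    M b - M a = of fun i j => ∫ t in a..b, M' t i j := by
  ext i j
  refine (intervalIntegral.integral_eq_sub_of_hasDeriv_right_of_le hab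
    (fun t ht => (hM t ht i j).continuousWithinAt) (fun t ht => ?_) (hM' i j)).symm
  exact ((hM t (Ioo_subset_Icc_self ht) i j).hasDerivAt
    (Icc_mem_nhds ht.1 ht.2)).hasDerivWithinAt

theorem integral_mul_mul_apply [Fintype κ] [Fintype ν] {a b : ℝ}
    (A : Matrix ι κ ℝ) (M : ℝ → Matrix κ ν ℝ) (C : Matrix ν μ ℝ)
    (hM : ∀ k l, IntervalIntegrable (fun t => M t k l) volume a b) (i : ι) (j : μ) :
    ∫ t in a..b, (A * M t * C) i j = (A * (of fun k l => ∫ t in a..b, M t k l) * C) i j := by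
  simp only [mul_apply, of_apply, Finset.sum_mul]
  rw [intervalIntegral.integral_finsetSum fun l _ => by
    simpa only [Finset.sum_fn] using
      IntervalIntegrable.sum _ fun k _ => ((hM k l).const_mul (A i k)).mul_const (C l j)]
  refine Finset.sum_congr rfl fun l _ => ?_
  rw [intervalIntegral.integral_finsetSum fun k _ => ((hM k l).const_mul _).mul_const _]
  refine Finset.sum_congr rfl fun k _ => ?_
  rw [intervalIntegral.integral_mul_const, intervalIntegral.integral_const_mul]

variable {m n α : Type*} [Fintype n] [DecidableEq n] [CommRing α]

theorem inv_neg_inv_mul_mul_transpose_inv {X W : Matrix n n α} (hX : IsUnit X.det)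
    (hW : IsUnit W.det) : (-(X⁻¹ * W * X⁻¹ᵀ))⁻¹ = -(Xᵀ * W⁻¹ * X) := by
  have hXt : IsUnit Xᵀ.det := by rwa [det_transpose]
  refine inv_eq_right_inv ?_
  rw [neg_mul_neg, transpose_nonsing_inv]
  simp only [Matrix.mul_assoc]
  rw [nonsing_inv_mul_cancel_left _ _ hXt, mul_nonsing_inv_cancel_left _ _ hW,
    nonsing_inv_mul _ hX]

theorem neg_mul_transpose_mulVec_inv_mulVec {X Y W : Matrix n n α} (hX : IsUnit X.det)
    (hW : IsUnit W.det) (L : Matrix m n α) (x₀ x_f : n → α) :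
    -((L * (X⁻¹ * Y)ᵀ) *ᵥ ((-(X⁻¹ * W * X⁻¹ᵀ))⁻¹ *ᵥ (x_f - X⁻¹ *ᵥ x₀))) =
      (L * Yᵀ * W⁻¹) *ᵥ (X *ᵥ x_f - x₀) := by
  have hXt : IsUnit Xᵀ.det := by rwa [det_transpose]
  have hgain : L * (X⁻¹ * Y)ᵀ * (Xᵀ * W⁻¹ * X) = L * Yᵀ * W⁻¹ * X := by
    simp only [transpose_mul, transpose_nonsing_inv, Matrix.mul_assoc]
    rw [nonsing_inv_mul_cancel_left _ _ hXt]
  have hstate : X *ᵥ (x_f - X⁻¹ *ᵥ x₀) = X *ᵥ x_f - x₀ := by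
    rw [mulVec_sub, mulVec_mulVec, mul_nonsing_inv _ hX, one_mulVec]
  rw [inv_neg_inv_mul_mul_transpose_inv hX hW, neg_mulVec, mulVec_neg, neg_neg, mulVec_mulVec,
    hgain, ← hstate, mulVec_mulVec]

end Matrix

theorem stmt_13_general {n m : ℕ} (t_f : ℝ) (ht : 0 < t_f)
    (Atil : ℝ → Matrix (Fin n) (Fin n) ℝ)
    (B : ℝ → Matrix (Fin n) (Fin m) ℝ)
    (hB : ContinuousOn B (Icc 0 t_f))
    (R : Matrix (Fin m) (Fin m) ℝ)
    (G : ℝ → Matrix (Fin n) (Fin n) ℝ)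
    (hG : G = fun t => B t * R⁻¹ * (B t)ᵀ)
    (Ψ : ℝ → Matrix (Fin n) (Fin n) ℝ)
    (hΨ : ∀ t ∈ Icc 0 t_f, ∀ i j,
      HasDerivWithinAt (fun s => Ψ s i j)
        ((-(Ψ t * Atil t)) i j) (Icc 0 t_f) t)
    (hΨ0 : Ψ 0 = 1) (hΨinv : ∀ t ∈ Icc 0 t_f, IsUnit (Ψ t))
    (S : ℝ → Matrix (Fin n) (Fin n) ℝ)
    (hS : S = fun t => ((Ψ t_f)⁻¹ * Ψ t)ᵀ)
    (P : ℝ → Matrix (Fin n) (Fin n) ℝ)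
    (hP : ∀ t ∈ Icc 0 t_f, ∀ i j,
      HasDerivWithinAt (fun s => P s i j)
        (((S t)ᵀ * G t * S t) i j) (Icc 0 t_f) t)
    (hPf : P t_f = 0)
    (W : Matrix (Fin n) (Fin n) ℝ)
    (hW : W = Matrix.of fun i j =>
      ∫ σ in (0:ℝ)..t_f, (Ψ σ * G σ * (Ψ σ)ᵀ) i j)
    (x₀ x_f : Fin n → ℝ) :
    P 0 = -((Ψ t_f)⁻¹ * W * ((Ψ t_f)⁻¹)ᵀ) ∧
    (IsUnit W → IsUnit (P 0)) ∧
    (IsUnit W →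
      ∀ t ∈ Icc 0 t_f,
        -((R⁻¹ * (B t)ᵀ * S t) *ᵥ ((P 0)⁻¹ *ᵥ (x_f - (S 0)ᵀ *ᵥ x₀))) =
          (R⁻¹ * (B t)ᵀ * (Ψ t)ᵀ * W⁻¹) *ᵥ (Ψ t_f *ᵥ x_f - x₀)) := by
  subst hS hW
  have hΨf : IsUnit (Ψ t_f) := hΨinv t_f (right_mem_Icc.2 ht.le)
  have hΨfdet : IsUnit (Ψ t_f).det := (isUnit_iff_isUnit_det _).1 hΨf
  have hgram : ContinuousOn (fun σ => Ψ σ * G σ * (Ψ σ)ᵀ) (uIcc 0 t_f) := by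
    have hΨc := continuousOn_of_hasDerivWithinAt_apply hΨ
    have hGc : ContinuousOn G (Icc 0 t_f) := hG ▸
      ((continuous_id.matrix_mul continuous_const).matrix_mul
        continuous_id.matrix_transpose).comp_continuousOn hB
    rw [uIcc_of_le ht.le]
    exact (hΨc.mul hGc).mul (continuous_id.matrix_transpose.comp_continuousOn hΨc)
  have hPdot : ∀ t, (((Ψ t_f)⁻¹ * Ψ t)ᵀ)ᵀ * G t * ((Ψ t_f)⁻¹ * Ψ t)ᵀ =
      (Ψ t_f)⁻¹ * (Ψ t * G t * (Ψ t)ᵀ) * ((Ψ t_f)⁻¹)ᵀ := fun t => by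
    simp only [transpose_transpose, transpose_mul, Matrix.mul_assoc]
  have hP0 : P 0 = -((Ψ t_f)⁻¹ * (of fun i j => ∫ σ in (0:ℝ)..t_f, (Ψ σ * G σ * (Ψ σ)ᵀ) i j) *
      ((Ψ t_f)⁻¹)ᵀ) := by
    simp only [hPdot] at hP
    have hftc := sub_eq_integral_of_hasDerivWithinAt_apply ht.le hP fun i j =>
      intervalIntegrable_apply_of_continuousOn
        ((continuous_const.matrix_mul continuous_id).matrix_mul continuous_const
          |>.comp_continuousOn hgram) i j
    rw [hPf, zero_sub, neg_eq_iff_eq_neg] at hftc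
    rw [hftc]
    congr 1
    ext i j
    exact integral_mul_mul_apply _ _ _ (intervalIntegrable_apply_of_continuousOn hgram) i j
  refine ⟨hP0, fun hWu => ?_, fun hWu t _ => ?_⟩
  · rw [hP0]
    have hΨfinv : IsUnit (Ψ t_f)⁻¹ := isUnit_nonsing_inv_iff.2 hΨf
    exact ((hΨfinv.mul hWu).mul ((isUnit_transpose _).2 hΨfinv)).neg
  · rw [transpose_transpose, hΨ0, Matrix.mul_one, hP0]
    exact neg_mul_transpose_mulVec_inv_mulVec hΨfdet ((isUnit_iff_isUnit_det _).1 hWu) _ _ _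

/-- In the minimum-energy case, `P(0) = −Ψ(t_f)⁻¹ W (Ψ(t_f)⁻¹)ᵀ`
(so `P(0)` is invertible whenever the Gramian `W` is), and the closed-loop
expression `−R⁻¹B(t)ᵀS(t)ν` of the minimum-energy control coincides with the
open-loop Gramian expression `R⁻¹B(t)ᵀΨ(t)ᵀW⁻¹ξ`. -/
theorem stmt_13 {n m : ℕ} (t_f : ℝ) (ht : 0 < t_f)
    (Atil : ℝ → Matrix (Fin n) (Fin n) ℝ)
    (B : ℝ → Matrix (Fin n) (Fin m) ℝ)
    (hA : ContinuousOn Atil (Icc 0 t_f))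
    (hB : ContinuousOn B (Icc 0 t_f))
    (R : Matrix (Fin m) (Fin m) ℝ) (hR : R.PosDef)
    (G : ℝ → Matrix (Fin n) (Fin n) ℝ)
    (hG : G = fun t => B t * R⁻¹ * (B t)ᵀ)
    (Ψ : ℝ → Matrix (Fin n) (Fin n) ℝ)
    (hΨ : ∀ t ∈ Icc 0 t_f, ∀ i j,
      HasDerivWithinAt (fun s => Ψ s i j)
        ((-(Ψ t * Atil t)) i j) (Icc 0 t_f) t)
    (hΨ0 : Ψ 0 = 1) (hΨinv : ∀ t ∈ Icc 0 t_f, IsUnit (Ψ t))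
    (S : ℝ → Matrix (Fin n) (Fin n) ℝ)
    (hS : S = fun t => ((Ψ t_f)⁻¹ * Ψ t)ᵀ)
    (P : ℝ → Matrix (Fin n) (Fin n) ℝ)
    (hP : ∀ t ∈ Icc 0 t_f, ∀ i j,
      HasDerivWithinAt (fun s => P s i j)
        (((S t)ᵀ * G t * S t) i j) (Icc 0 t_f) t)
    (hPf : P t_f = 0)
    (W : Matrix (Fin n) (Fin n) ℝ)
    (hW : W = Matrix.of fun i j =>
      ∫ σ in (0:ℝ)..t_f, (Ψ σ * G σ * (Ψ σ)ᵀ) i j)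
    (x₀ x_f : Fin n → ℝ) :
    P 0 = -((Ψ t_f)⁻¹ * W * ((Ψ t_f)⁻¹)ᵀ) ∧
    (IsUnit W → IsUnit (P 0)) ∧
    (IsUnit W →
      ∀ t ∈ Icc 0 t_f,
        -((R⁻¹ * (B t)ᵀ * S t) *ᵥ ((P 0)⁻¹ *ᵥ (x_f - (S 0)ᵀ *ᵥ x₀))) =
          (R⁻¹ * (B t)ᵀ * (Ψ t)ᵀ * W⁻¹) *ᵥ (Ψ t_f *ᵥ x_f - x₀)) :=
  stmt_13_general t_f ht Atil B hB R G hG Ψ hΨ hΨ0 hΨinv S hS P hP hPf W hW x₀ x_f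
end
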